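/- arXiv:2412.01962 — 7 statements merged into one kernel-verified Lean document; each statement's English description precedes it below -/
import Mathlib

section
/- Let n ≥ 1 and let λ, μ ∈ ℤⁿ be weakly decreasing sequences (dominant coweights for GL_n) such that λ = μ + ϖ_t, where ϖ_t = (1,...,1,0,...,0) with t ones, 1 ≤ t ≤ n-1. If λ' ∈ ℤⁿ is another weakly decreasing sequence with λ' ⪯ λ (dominance order), then the weakly decreasing rearrangement of λ' - ϖ_t satisfies dom(λ' - ϖ_t) ⪯ μ. -/
open Finset

/-- Standard basis vector `e_j` in `ℤⁿ`. -/
def ev (n : ℕ) (j : Fin n) : Fin n → ℤ := fun k => if k = j then 1 else 0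

/-- The coweight `ϖ_t = e_1 + ⋯ + e_t` (t ones followed by zeros). -/
def varpi (n t : ℕ) : Fin n → ℤ := fun j => if (j : ℕ) < t then 1 else 0

/-- Dominance order `μ ⪯ λ`: equal total sums, partial sums of `μ` bounded by those of `λ`. -/
def DomLE {n : ℕ} (μ lam : Fin n → ℤ) : Prop :=
  (∑ i, μ i = ∑ i, lam i) ∧
  ∀ k : Fin n, ∑ i ∈ Finset.Iic k, μ i ≤ ∑ i ∈ Finset.Iic k, lam i

/-- A coweight is dominant iff its coordinates are weakly decreasing. -/
def IsDominant {n : ℕ} (v : Fin n → ℤ) : Prop := ∀ i j : Fin n, i ≤ j → v j ≤ v i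

/-- The weakly decreasing rearrangement `dom(v)` of `v`. -/
noncomputable def domOf {n : ℕ} (v : Fin n → ℤ) : Fin n → ℤ :=
  v ∘ Tuple.sort (fun i => -v i)

/-- `succA x i` is `x^{(i+1)}`, with the convention `x^{(n+1)} = x^{(1)} + (1,…,1)`. -/
def succA {n : ℕ} (x : Fin n → Fin n → ℤ) (i : Fin n) : Fin n → ℤ :=
  if h : (i : ℕ) + 1 < n then x ⟨(i : ℕ) + 1, h⟩ else fun j => x ⟨0, i.pos⟩ j + 1

/-- A tuple `(x^{(1)},…,x^{(n)})` is an alcove. -/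
def IsAlcove {n : ℕ} (x : Fin n → Fin n → ℤ) : Prop :=
  (∀ i : Fin n, ∀ j, x i j ≤ succA x i j) ∧
  (∀ i : Fin n, (i : ℕ) + 1 < n → ∑ j, succA x i j = (∑ j, x i j) + 1)

/-- `P` is the permutation `P(x)` of the alcove `x`: `x^{(i+1)} = x^{(i)} + e_{P(x)(i)}`. -/
def IsPermOf {n : ℕ} (x : Fin n → Fin n → ℤ) (P : Equiv.Perm (Fin n)) : Prop :=
  ∀ i : Fin n, ∀ j, succA x i j = x i j + ev n (P i) j

/-- A permutation acts on `ℤⁿ` by permuting coordinates: `(σv)_{σ(i)} = v_i`. -/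
def permAct {n : ℕ} (σ : Equiv.Perm (Fin n)) (v : Fin n → ℤ) : Fin n → ℤ :=
  fun j => v (σ.symm j)

/-- The `n`-cycle `c = (1 2 ⋯ n)`. -/
def cyc (n : ℕ) [NeZero n] : Equiv.Perm (Fin n) := Equiv.addRight 1

/-- Rotation of alcoves. -/
def rotA {n : ℕ} [NeZero n] (x : Fin n → Fin n → ℤ) : Fin n → Fin n → ℤ := fun i =>
  if h : (i : ℕ) + 1 < n then
    permAct (cyc n)⁻¹ (fun j => x ⟨(i : ℕ) + 1, h⟩ j - varpi n 1 j)
  else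
    fun j => permAct (cyc n)⁻¹ (x 0) j + varpi n (n - 1) j

/-- An alcove is `λ`-permissible if `dom(x^{(i)} - ϖ_{i-1}) ⪯ λ` for all `i`. -/
noncomputable def Permissible {n : ℕ} (lam : Fin n → ℤ) (x : Fin n → Fin n → ℤ) : Prop :=
  ∀ i : Fin n, DomLE (domOf (fun j => x i j - varpi n (i : ℕ) j)) lam

/-- The Kottwitz–Rapoport relation `i ⊴_x j` (six-case rule). -/
def TriLE {n : ℕ} (x : Fin n → Fin n → ℤ) (P : Equiv.Perm (Fin n)) (i j : Fin n) : Prop :=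
  (x ⟨0, i.pos⟩ j < x ⟨0, i.pos⟩ i) ∨
  (x ⟨0, i.pos⟩ i = x ⟨0, i.pos⟩ j ∧
    ((P.symm i < i ∧ P.symm j < j ∧ j ≤ i) ∨
     (P.symm i < i ∧ j ≤ P.symm j) ∨
     (P.symm i = i ∧ P.symm j = j ∧ i = j) ∨
     (P.symm i = i ∧ j < P.symm j) ∨
     (i < P.symm i ∧ j < P.symm j ∧ j ≤ i)))

/-!
A `k`-subset sum of the dominant `lam'` is at most its `k`-th partial sum, and a partial sum of
`domOf v` is a `k`-subset sum of `v`; so it suffices to bound `∑ j ∈ S, (lam' j - [j < t])` by the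
`k`-th partial sum of `μ` for every `k`-subset `S`, knowing `Λ'_k ≤ M_k + min k t` for the partial
sums `Λ'`, `M` of `lam'`, `μ`. Let `m = #(S ∩ [0, t))` and `d = lam' t`. If `d ≤ μ_i` for all
`i < k`, bound the part of `S` below `t` by `Λ'_m ≤ M_m + m` and each of the other `k - m` terms
by `lam' j ≤ d ≤ μ_i`, `m ≤ i < k`. Otherwise `μ_i < d` for all `i ≥ k`, while `lam' j ≥ d`
for `j < t`: enlarge `S` by the `t - m` missing indices below `t` and use `Λ'_r ≤ M_r + t` for
`r = k + t - m`; the added entries are each `≥ d`, the extra terms `μ_i` (`k ≤ i < r`) of `M_r`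
each `≤ d - 1`.
-/

def initSeg (n k : ℕ) : Finset (Fin n) := {i | (i : ℕ) < k}

section InitSeg

variable {n : ℕ}

@[simp]
lemma mem_initSeg {k : ℕ} {i : Fin n} : i ∈ initSeg n k ↔ (i : ℕ) < k := by
  simp [initSeg]

lemma initSeg_mono {k l : ℕ} (h : k ≤ l) : initSeg n k ⊆ initSeg n l := fun i hi => by
  rw [mem_initSeg] at *; omega

lemma initSeg_inter_initSeg (k l : ℕ) : initSeg n k ∩ initSeg n l = initSeg n (min k l) := by
  ext i; simp

lemma initSeg_of_le {k : ℕ} (h : n ≤ k) : initSeg n k = univ := by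
  ext i; simp only [mem_initSeg, mem_univ, iff_true]; omega

lemma Iic_eq_initSeg (k : Fin n) : Iic k = initSeg n (k + 1) := by
  ext i; simp only [mem_Iic, mem_initSeg, Fin.le_def]; omega

lemma initSeg_succ {k : ℕ} (hk : k < n) : initSeg n (k + 1) = insert ⟨k, hk⟩ (initSeg n k) := by
  ext i; simp only [mem_insert, mem_initSeg, Fin.ext_iff]; omega

lemma card_initSeg {k : ℕ} (h : k ≤ n) : #(initSeg n k) = k := by
  induction k with
  | zero => simp [initSeg]
  | succ k ih =>
    rw [initSeg_succ h, card_insert_of_notMem (by simp), ih (by omega)]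

lemma sum_le_sum_initSeg_of_antitone {M : Type*} [AddCommMonoid M] [PartialOrder M]
    [IsOrderedAddMonoid M] {f : Fin n → M} (hf : Antitone f) (S : Finset (Fin n)) :
    ∑ i ∈ S, f i ≤ ∑ i ∈ initSeg n #S, f i := by
  induction S using Finset.induction_on_max with
  | empty => simp [initSeg]
  | insert a s has ih =>
    have ha : a ∉ s := fun ha => lt_irrefl a (has a ha)
    have hs : #s ≤ a := by
      simpa using card_le_card (show s ⊆ Iio a from fun x hx => mem_Iio.2 (has x hx))
    rw [sum_insert ha, card_insert_of_notMem ha, initSeg_succ (by omega), sum_insert (by simp)]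
    exact add_le_add (hf (Fin.le_def.2 hs)) ih

lemma sum_varpi (t : ℕ) (S : Finset (Fin n)) : ∑ j ∈ S, varpi n t j = #(S ∩ initSeg n t) := by
  simp [varpi, ← mem_initSeg]

lemma DomLE.sum_initSeg_le {μ lam : Fin n → ℤ} (h : DomLE μ lam) (k : ℕ) :
    ∑ i ∈ initSeg n k, μ i ≤ ∑ i ∈ initSeg n k, lam i := by
  rcases k with _ | k
  · simp [initSeg]
  by_cases hk : k < n
  · simpa [Iic_eq_initSeg] using h.2 ⟨k, hk⟩
  · rw [initSeg_of_le (by omega)]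
    exact h.1.le

lemma domLE_domOf_of_forall_sum_le {v μ : Fin n → ℤ} (hsum : ∑ i, v i = ∑ i, μ i)
    (h : ∀ S : Finset (Fin n), ∑ i ∈ S, v i ≤ ∑ i ∈ initSeg n #S, μ i) :
    DomLE (domOf v) μ := by
  set σ := Tuple.sort fun i => -v i
  refine ⟨(Equiv.sum_comp σ v).trans hsum, fun k => ?_⟩
  simpa [Iic_eq_initSeg, card_initSeg k.isLt, domOf, σ] using h ((Iic k).map σ.toEmbedding)

end InitSeg

section SubtractVarpi

variable {n t : ℕ} {μ lam' : Fin n → ℤ} {d : ℤ}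

lemma sum_sub_varpi_le_of_forall_le (hlam' : Antitone lam') (ht : t ≤ n)
    (hpartial : ∀ k, ∑ i ∈ initSeg n k, lam' i ≤ ∑ i ∈ initSeg n k, μ i + min k t)
    {S : Finset (Fin n)} (hd : ∀ j ∉ initSeg n t, lam' j ≤ d)
    (hμd : ∀ i ∈ initSeg n #S, d ≤ μ i) :
    ∑ j ∈ S, (lam' j - varpi n t j) ≤ ∑ i ∈ initSeg n #S, μ i := by
  rw [sum_sub_distrib, sum_varpi]
  set I := initSeg n t
  have hA : #(S ∩ I) ≤ t := card_initSeg ht ▸ card_le_card inter_subset_right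
  have hAS : #(S ∩ I) ≤ #S := card_le_card inter_subset_left
  have hsplit := sum_inter_add_sum_sdiff S I lam'
  have hcard := card_sdiff_add_card_inter S I
  have h1 : ∑ i ∈ S ∩ I, lam' i ≤ ∑ i ∈ initSeg n #(S ∩ I), μ i + #(S ∩ I) := by
    have := hpartial #(S ∩ I)
    rw [min_eq_left hA] at this
    exact (sum_le_sum_initSeg_of_antitone hlam' _).trans this
  have h2 : ∑ i ∈ S \ I, lam' i ≤ #(S \ I) • d :=
    sum_le_card_nsmul _ _ _ fun j hj => hd j (mem_sdiff.1 hj).2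
  have h3 : #(S \ I) • d ≤ ∑ i ∈ initSeg n #S \ initSeg n #(S ∩ I), μ i := by
    refine card_nsmul_le_sum _ _ _ (fun i hi => hμd i (mem_sdiff.1 hi).1) |>.trans' ?_
    rw [card_sdiff_of_subset (initSeg_mono hAS), card_initSeg (card_finset_fin_le S),
      card_initSeg (hAS.trans (card_finset_fin_le S)), ← hcard, Nat.add_sub_cancel]
  have h4 := sum_sdiff (initSeg_mono hAS) (f := μ)
  linarith

lemma sum_sub_varpi_le_of_forall_lt (hlam' : Antitone lam') (ht : t ≤ n)
    (hpartial : ∀ k, ∑ i ∈ initSeg n k, lam' i ≤ ∑ i ∈ initSeg n k, μ i + min k t)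
    {S : Finset (Fin n)} (hd : ∀ j ∈ initSeg n t, d ≤ lam' j)
    (hμd : ∀ i ∉ initSeg n #S, μ i < d) :
    ∑ j ∈ S, (lam' j - varpi n t j) ≤ ∑ i ∈ initSeg n #S, μ i := by
  rw [sum_sub_distrib, sum_varpi]
  set I := initSeg n t
  have hI : #I = t := card_initSeg ht
  have hT : ∑ i ∈ S ∪ I, lam' i = ∑ i ∈ S, lam' i + ∑ i ∈ I \ S, lam' i := by
    rw [← union_sdiff_self_eq_union, sum_union disjoint_sdiff]
  have hTcard : #(S ∪ I) = #S + #(I \ S) := by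
    rw [← union_sdiff_self_eq_union, card_union_of_disjoint disjoint_sdiff]
  have hcard : #(I \ S) + #(S ∩ I) = t := by
    rw [inter_comm, card_sdiff_add_card_inter, hI]
  have hTn : #(S ∪ I) ≤ n := card_finset_fin_le _
  have h1 : ∑ i ∈ S ∪ I, lam' i ≤ ∑ i ∈ initSeg n #(S ∪ I), μ i + t := by
    have := hpartial #(S ∪ I)
    rw [min_eq_right (hI ▸ card_le_card subset_union_right)] at this
    exact (sum_le_sum_initSeg_of_antitone hlam' _).trans this
  have hST : #S ≤ #(S ∪ I) := card_le_card subset_union_left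
  have h2 := sum_sdiff (initSeg_mono hST) (f := μ)
  have h3 : ∑ i ∈ initSeg n #(S ∪ I) \ initSeg n #S, μ i ≤ #(I \ S) • (d - 1) := by
    refine (sum_le_card_nsmul _ _ (d - 1) fun i hi => ?_).trans_eq ?_
    · exact Int.le_sub_one_of_lt (hμd i (mem_sdiff.1 hi).2)
    · rw [card_sdiff_of_subset (initSeg_mono hST), card_initSeg hTn,
        card_initSeg (hST.trans hTn), hTcard, Nat.add_sub_cancel_left]
  have h4 : #(I \ S) • d ≤ ∑ i ∈ I \ S, lam' i :=
    card_nsmul_le_sum _ _ _ fun j hj => hd j (mem_sdiff.1 hj).1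
  simp only [nsmul_eq_mul, mul_sub_one] at h3 h4
  linarith

lemma sum_sub_varpi_le_sum_initSeg (hlam' : Antitone lam') (hμ : Antitone μ) (ht : t < n)
    (hpartial : ∀ k, ∑ i ∈ initSeg n k, lam' i ≤ ∑ i ∈ initSeg n k, μ i + min k t)
    (S : Finset (Fin n)) :
    ∑ j ∈ S, (lam' j - varpi n t j) ≤ ∑ i ∈ initSeg n #S, μ i := by
  set d := lam' ⟨t, ht⟩
  by_cases hμd : ∀ i ∈ initSeg n #S, d ≤ μ i
  · refine sum_sub_varpi_le_of_forall_le hlam' ht.le hpartial (fun j hj => hlam' ?_) hμd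
    simpa [Fin.le_def] using hj
  · push Not at hμd
    obtain ⟨i₀, hi₀, hμi₀⟩ := hμd
    refine sum_sub_varpi_le_of_forall_lt hlam' ht.le hpartial
      (fun j hj => hlam' (Fin.le_def.2 (mem_initSeg.1 hj).le : j ≤ ⟨t, ht⟩)) fun i hi => ?_
    refine (hμ (Fin.le_def.2 ?_)).trans_lt hμi₀
    rw [mem_initSeg] at hi hi₀
    omega

end SubtractVarpi

theorem dom_subtract_general (n : ℕ) (hn : 1 ≤ n) (t : ℕ) (htn : t ≤ n - 1)
    (μ lam lam' : Fin n → ℤ)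
    (hμ : IsDominant μ) (hlam' : IsDominant lam')
    (heq : ∀ j, lam j = μ j + varpi n t j)
    (hle : DomLE lam' lam) :
    DomLE (domOf (fun j => lam' j - varpi n t j)) μ := by
  obtain rfl : lam = μ + varpi n t := funext heq
  have hpartial (k : ℕ) : ∑ i ∈ initSeg n k, lam' i ≤ ∑ i ∈ initSeg n k, μ i + min k t := by
    have := hle.sum_initSeg_le k
    rwa [Pi.add_def, sum_add_distrib, sum_varpi, initSeg_inter_initSeg,
      card_initSeg (by omega)] at this
  refine domLE_domOf_of_forall_sum_le ?_
    (sum_sub_varpi_le_sum_initSeg hlam' hμ (by omega) hpartial)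
  rw [sum_sub_distrib, hle.1, Pi.add_def, sum_add_distrib, add_sub_cancel_right]

theorem dom_subtract (n : ℕ) (hn : 1 ≤ n) (t : ℕ) (ht : 1 ≤ t) (htn : t ≤ n - 1)
    (μ lam lam' : Fin n → ℤ)
    (hμ : IsDominant μ) (hlam : IsDominant lam) (hlam' : IsDominant lam')
    (heq : ∀ j, lam j = μ j + varpi n t j)
    (hle : DomLE lam' lam) :
    DomLE (domOf (fun j => lam' j - varpi n t j)) μ :=
  dom_subtract_general n hn t htn μ lam lam' hμ hlam' heq hle
end

section
/- Let x be an alcove and let λ ∈ ℤⁿ be dominant (weakly decreasing). If x is λ-permissible, i.e., dom(x^{(i)} - ϖ_{i-1}) ⪯ λ for all 1 ≤ i ≤ n, then rot(x) is also λ-permissible. -/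
open Finset

/-!
Since `c⁻¹ϖ_i = c⁻¹ϖ_1 + ϖ_{i-1}`, the vector `rot(x)^{(i)} - ϖ_{i-1}` is `c⁻¹(x^{(i+1)} - ϖ_i)`
for `i < n`, and `rot(x)^{(n)} - ϖ_{n-1} = c⁻¹(x^{(1)} - ϖ_0)`. A permutation of coordinates
does not change `dom`, so the permissibility conditions of `rot(x)` are those of `x`.
-/

lemma domOf_comp_perm {n : ℕ} (v : Fin n → ℤ) (σ : Equiv.Perm (Fin n)) :
    domOf (v ∘ σ) = domOf v := by
  funext k
  have h := congrFun (Tuple.comp_perm_comp_sort_eq_comp_sort (σ := σ) (f := fun i => -v i)) k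
  simp only [Function.comp_apply] at h
  change v (σ (Tuple.sort ((fun i => -v i) ∘ σ) k)) = v (Tuple.sort (fun i => -v i) k)
  omega

lemma permAct_cyc_inv {n : ℕ} [NeZero n] (v : Fin n → ℤ) :
    permAct (cyc n)⁻¹ v = v ∘ cyc n := rfl

lemma varpi_succ_apply_add_one {n t : ℕ} [NeZero n] (ht : t < n) (j : Fin n) :
    varpi n (t + 1) (j + 1) = varpi n 1 (j + 1) + varpi n t j := by
  have hv : ((j + 1 : Fin n) : ℕ) = ((j : ℕ) + 1) % n := by
    rw [Fin.val_add, Fin.val_one', Nat.add_mod_mod]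
  have hj := j.isLt
  simp only [varpi, hv]
  rcases (Nat.succ_le_of_lt hj).eq_or_lt with hlast | hlt
  · rw [show (j : ℕ) + 1 = n from hlast, Nat.mod_self]
    split_ifs <;> omega
  · rw [Nat.mod_eq_of_lt hlt]
    split_ifs <;> omega

lemma rotA_sub_varpi_of_lt {n : ℕ} [NeZero n] (x : Fin n → Fin n → ℤ) {i : Fin n}
    (h : (i : ℕ) + 1 < n) :
    (fun j => rotA x i j - varpi n i j) =
      (fun j => x ⟨i + 1, h⟩ j - varpi n (i + 1) j) ∘ cyc n := by
  funext j
  simp only [rotA, dif_pos h, permAct_cyc_inv]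
  simp only [Function.comp_apply, cyc, Equiv.coe_addRight, varpi_succ_apply_add_one i.isLt]
  ring

lemma rotA_sub_varpi_of_not_lt {n : ℕ} [NeZero n] (x : Fin n → Fin n → ℤ) {i : Fin n}
    (h : ¬ (i : ℕ) + 1 < n) :
    (fun j => rotA x i j - varpi n i j) = (fun j => x 0 j - varpi n 0 j) ∘ cyc n := by
  have hi : (i : ℕ) = n - 1 := by omega
  funext j
  simp [rotA, dif_neg h, permAct_cyc_inv, hi, varpi]

theorem rot_permissible_general (n : ℕ) [NeZero n] (x : Fin n → Fin n → ℤ)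
    (lam : Fin n → ℤ) (hperm : Permissible lam x) :
    Permissible lam (rotA x) := by
  intro i
  by_cases h : (i : ℕ) + 1 < n
  · rw [rotA_sub_varpi_of_lt x h, domOf_comp_perm]
    exact hperm ⟨i + 1, h⟩
  · rw [rotA_sub_varpi_of_not_lt x h, domOf_comp_perm]
    exact hperm 0

theorem rot_permissible (n : ℕ) [NeZero n] (x : Fin n → Fin n → ℤ) (hx : IsAlcove x)
    (lam : Fin n → ℤ) (hlam : IsDominant lam) (hperm : Permissible lam x) :
    Permissible lam (rotA x) :=
  rot_permissible_general n x lam hperm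
end

section
/- For any alcove x and 1 ≤ j ≤ n, the j-fold rotation satisfies rot^j(x)^{(i)} = c^{-j}(x^{(i+j)} - ϖ_j) if 1 ≤ i ≤ n-j, and rot^j(x)^{(i)} = c^{-j}(x^{(i-n+j)} - ϖ_{i-n+j-1}) + ϖ_{i-1} if n-j < i ≤ n. In particular rot^n(x) = x. -/
open Finset

/-!
Unfolding one rotation shifts the alcove index by one and the coordinates by `c⁻¹`; the index
wraps around after `x^{(n)}`, where the correction `ϖ_{n-1}` enters. Iterating, the `ϖ`-corrections
telescope thanks to the two identities `ϖ_{j+1} = ϖ_j + c^j ϖ_1` and `c⁻¹(ϖ_{i+1} - ϖ_1) = ϖ_i`.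
For `j = n` the shift `c^{-n}` is trivial and the corrections cancel, so `rot^n = id`.
-/

section

open Fin.CommRing

variable {n : ℕ} [NeZero n]

lemma cyc_pow_apply (j : ℕ) (k : Fin n) : (cyc n ^ j) k = k + (j : Fin n) := by
  induction j with
  | zero => simp
  | succ j ih =>
    rw [pow_succ', Equiv.Perm.mul_apply, ih]
    change k + (j : Fin n) + 1 = k + ((j + 1 : ℕ) : Fin n)
    push_cast
    abel

lemma permAct_cyc_pow_inv_apply (j : ℕ) (v : Fin n → ℤ) (k : Fin n) :
    permAct (cyc n ^ j)⁻¹ v k = v (k + (j : Fin n)) :=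
  congrArg v (cyc_pow_apply j k)

lemma varpi_succ_apply_add {j : ℕ} (hj : j < n) (a : Fin n) :
    varpi n (j + 1) (a + (j : Fin n)) = varpi n j (a + (j : Fin n)) + varpi n 1 a := by
  have := a.isLt
  simp only [varpi, Fin.val_add_eq_ite, Fin.val_natCast, Nat.mod_eq_of_lt hj]
  split_ifs <;> omega

lemma varpi_succ_apply_add_one_s8 {i : ℕ} (hi : i < n) (a : Fin n) :
    varpi n (i + 1) (a + 1) = varpi n 1 (a + 1) + varpi n i a := by
  have := a.isLt
  rcases Nat.lt_or_ge 1 n with hn | hn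
  · simp only [varpi, Fin.val_add_eq_ite, Fin.val_one', Nat.mod_eq_of_lt hn]
    split_ifs <;> omega
  · obtain rfl : n = 1 := by omega
    simp [varpi, Fin.val_eq_zero, show i = 0 by omega]

lemma rotA_apply_of_lt (x : Fin n → Fin n → ℤ) {i : Fin n} (hi : (i : ℕ) + 1 < n) (k : Fin n) :
    rotA x i k = x ⟨i + 1, hi⟩ (k + 1) - varpi n 1 (k + 1) := by
  simpa [rotA, hi] using permAct_cyc_pow_inv_apply 1 (fun j => x ⟨i + 1, hi⟩ j - varpi n 1 j) k

lemma rotA_apply_of_le (x : Fin n → Fin n → ℤ) {i : Fin n} (hi : n ≤ (i : ℕ) + 1) (k : Fin n) :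
    rotA x i k = x 0 (k + 1) + varpi n (n - 1) k := by
  simpa [rotA, show ¬((i : ℕ) + 1 < n) by omega] using permAct_cyc_pow_inv_apply 1 (x 0) k

lemma rotA_iterate_apply_of_lt (x : Fin n → Fin n → ℤ) (j : ℕ) (i : Fin n)
    (h : (i : ℕ) + j < n) (k : Fin n) :
    rotA^[j] x i k = x ⟨i + j, h⟩ (k + (j : Fin n)) - varpi n j (k + (j : Fin n)) := by
  induction j generalizing i k with
  | zero => simp [varpi]
  | succ j ih =>
    have hi : (i : ℕ) + 1 < n := by omega
    have hshift : k + ((j + 1 : ℕ) : Fin n) = k + 1 + (j : Fin n) := by push_cast; abel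
    rw [Function.iterate_succ_apply', rotA_apply_of_lt _ hi, ih _ (by simp only; omega), hshift,
      varpi_succ_apply_add (by omega)]
    simp only [show (i : ℕ) + 1 + j = i + (j + 1) by omega]
    ring

lemma rotA_iterate_apply_of_le (x : Fin n → Fin n → ℤ) (j : ℕ) (hj : j ≤ n) (i : Fin n)
    (h : n ≤ (i : ℕ) + j) (k : Fin n) :
    rotA^[j] x i k =
      x ⟨i + j - n, Nat.sub_lt_left_of_lt_add h (Nat.add_lt_add_of_lt_of_le i.isLt hj)⟩
        (k + (j : Fin n)) - varpi n (i + j - n) (k + (j : Fin n)) + varpi n i k := by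
  induction j generalizing i k with
  | zero => exact absurd i.isLt (by omega)
  | succ j ih =>
    have hshift : k + ((j + 1 : ℕ) : Fin n) = k + 1 + (j : Fin n) := by push_cast; abel
    rw [Function.iterate_succ_apply', hshift]
    by_cases hi : (i : ℕ) + 1 < n
    · rw [rotA_apply_of_lt _ hi, ih (by omega) _ (by simp only; omega),
        varpi_succ_apply_add_one_s8 i.isLt]
      simp only [show (i : ℕ) + 1 + j - n = i + (j + 1) - n by omega]
      ring
    · have hi' : (i : ℕ) = n - 1 := by omega
      rw [rotA_apply_of_le _ (by omega), rotA_iterate_apply_of_lt _ _ _ (by simp; omega)]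
      simp only [hi', Fin.val_zero, show n - 1 + (j + 1) - n = j by omega, zero_add]

end

theorem rot_iterate (n : ℕ) [NeZero n] (x : Fin n → Fin n → ℤ) :
    (∀ j : ℕ, ∀ _hj1 : 1 ≤ j, ∀ _hjn : j ≤ n, ∀ i : Fin n,
      (∀ h : (i : ℕ) + j < n,
        rotA^[j] x i =
          permAct ((cyc n) ^ j)⁻¹ (fun l => x ⟨(i : ℕ) + j, h⟩ l - varpi n j l)) ∧
      (∀ _h : n ≤ (i : ℕ) + j, ∀ k,
        rotA^[j] x i k =
          permAct ((cyc n) ^ j)⁻¹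
            (fun l => x ⟨(i : ℕ) + j - n, by have := i.isLt; omega⟩ l
              - varpi n ((i : ℕ) + j - n) l) k
          + varpi n (i : ℕ) k)) ∧
    rotA^[n] x = x := by
  refine ⟨fun j _ hjn i => ⟨fun h => ?_, fun h k => ?_⟩, ?_⟩
  · funext k
    rw [permAct_cyc_pow_inv_apply, rotA_iterate_apply_of_lt]
  · rw [permAct_cyc_pow_inv_apply, rotA_iterate_apply_of_le _ _ hjn _ h]
  · funext i k
    rw [rotA_iterate_apply_of_le _ _ le_rfl _ (by omega)]
    simp only [Fin.natCast_self, add_zero, Nat.add_sub_cancel, Fin.eta, sub_add_cancel]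
end

section
/- Let x be an alcove with P(x)(1) = 1. Then for all i, j ∈ {1,...,n}, i ⊴_x j if and only if c^{-1}(i) ⊴_{rot(x)} c^{-1}(j), where c is the n-cycle (1 2 ... n). -/
open Finset

/-! Index `0 : Fin n` plays the role of the paper's `1`.

Rotation conjugates the permutation, `P(rot x) = c⁻¹ P(x) c`, and when `P(x)` fixes `1` the first
vertex of `rot x` is `x^{(1)}` relabelled by `c⁻¹` (the step `x^{(2)} = x^{(1)} + e_1` cancels the
shift by `ϖ_1`). So `⊴_{rot x}` is `⊴_x` transported along `c⁻¹ : a ↦ a - 1`, which preserves the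
order away from `1`, the point fixed by `P(x)`. -/

lemma ev_apply_apply {n : ℕ} (σ : Equiv.Perm (Fin n)) (a b : Fin n) :
    ev n (σ a) (σ b) = ev n a b := by
  simp [ev]

lemma IsPermOf.unique {n : ℕ} {x : Fin n → Fin n → ℤ} {P Q : Equiv.Perm (Fin n)}
    (hP : IsPermOf x P) (hQ : IsPermOf x Q) : P = Q := by
  refine Equiv.ext fun i => ?_
  have h := hQ i (P i)
  rw [hP i (P i)] at h
  simpa [ev] using h

namespace Fin

lemma add_one_eq_zero_of_not_lt {n : ℕ} [NeZero n] {i : Fin n} (h : ¬ (i : ℕ) + 1 < n) :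
    i + 1 = 0 := by
  obtain ⟨m, rfl⟩ := Nat.exists_eq_succ_of_ne_zero (NeZero.ne n)
  rw [show i = Fin.last m from Fin.ext (by simp; omega), Fin.last_add_one]

end Fin

section
variable {n : ℕ} [NeZero n]

lemma cyc_apply (a : Fin n) : cyc n a = a + 1 := rfl

lemma cyc_symm_apply (a : Fin n) : (cyc n).symm a = a - 1 := by
  simp [cyc, sub_eq_add_neg]

lemma strictMonoOn_cyc_symm : StrictMonoOn (cyc n).symm {0}ᶜ := by
  intro a ha b hb hab
  rw [cyc_symm_apply, cyc_symm_apply, Fin.lt_def, Fin.val_sub_one_of_ne_zero ha,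
    Fin.val_sub_one_of_ne_zero hb]
  have := Fin.pos_iff_ne_zero.2 ha
  omega

lemma succA_apply (x : Fin n → Fin n → ℤ) (i j : Fin n) :
    succA x i j = x (cyc n i) j + if (i : ℕ) + 1 < n then 0 else 1 := by
  unfold succA
  split_ifs with h
  · rw [cyc_apply, show i + 1 = ⟨i + 1, h⟩ from Fin.ext (Fin.val_add_one_of_lt' h), add_zero]
  · rw [cyc_apply, Fin.add_one_eq_zero_of_not_lt h]
    rfl

lemma varpi_sub_one_apply (j : Fin n) : varpi n (n - 1) j = 1 - varpi n 1 (cyc n j) := by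
  unfold varpi
  by_cases h : (j : ℕ) + 1 < n
  · rw [cyc_apply, if_pos (by omega), if_neg (by rw [Fin.val_add_one_of_lt' h]; omega)]
    norm_num
  · rw [cyc_apply, Fin.add_one_eq_zero_of_not_lt h, if_neg (by omega)]
    simp

lemma rotA_apply (x : Fin n → Fin n → ℤ) (i j : Fin n) :
    rotA x i j = succA x i (cyc n j) - varpi n 1 (cyc n j) := by
  unfold rotA succA
  split_ifs
  · rfl
  · change x 0 (cyc n j) + varpi n (n - 1) j = x 0 (cyc n j) + 1 - varpi n 1 (cyc n j)
    rw [varpi_sub_one_apply]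
    ring

lemma varpi_one_eq_ev_zero : varpi n 1 = ev n 0 := by
  ext k
  rcases eq_or_ne k 0 with rfl | hk
  · simp [varpi, ev]
  · simp [varpi, ev, hk, Fin.val_ne_zero_iff.2 hk]

lemma IsPermOf.rotA {x : Fin n → Fin n → ℤ} {P : Equiv.Perm (Fin n)} (hP : IsPermOf x P) :
    IsPermOf (rotA x) ((cyc n)⁻¹ * P * cyc n) := by
  intro i j
  have hev : ev n (((cyc n)⁻¹ * P * cyc n) i) j = ev n (P (cyc n i)) (cyc n j) := by
    rw [← ev_apply_apply (cyc n)]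
    simp [Equiv.Perm.inv_def]
  rw [hev, succA_apply, rotA_apply, rotA_apply, hP, succA_apply]
  ring

lemma rotA_zero_cyc_symm {x : Fin n → Fin n → ℤ} {P : Equiv.Perm (Fin n)} (hP : IsPermOf x P)
    (hP0 : P 0 = 0) (k : Fin n) : rotA x 0 ((cyc n).symm k) = x 0 k := by
  rw [rotA_apply, Equiv.apply_symm_apply, hP, hP0, varpi_one_eq_ev_zero, add_sub_cancel_right]

end

lemma triLE_congr {n : ℕ} [NeZero n] {x y : Fin n → Fin n → ℤ} {P Q f : Equiv.Perm (Fin n)}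
    (hrow : ∀ k, y 0 (f k) = x 0 k) (hQ : Q = f * P * f⁻¹) (hP0 : P 0 = 0)
    (hf : StrictMonoOn f {0}ᶜ) (i j : Fin n) :
    TriLE x P i j ↔ TriLE y Q (f i) (f j) := by
  subst hQ
  have hQsymm : ∀ k, (f * P * f⁻¹).symm (f k) = f (P.symm k) := fun k => by
    change (f * P * f⁻¹)⁻¹ (f k) = f (P⁻¹ k)
    simp [mul_assoc]
  have h0 : P.symm 0 = 0 := by rw [Equiv.symm_apply_eq, hP0]
  have hne : ∀ {a}, a ≠ 0 → P.symm a ≠ 0 := fun ha => by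
    rwa [← h0, ne_eq, P.symm.injective.eq_iff]
  have hlt : ∀ {a b}, a ≠ 0 → b ≠ 0 → (f a < f b ↔ a < b) := fun ha hb => hf.lt_iff_lt ha hb
  have hle : ∀ {a b}, a ≠ 0 → b ≠ 0 → (f a ≤ f b ↔ a ≤ b) := fun ha hb => hf.le_iff_le ha hb
  unfold TriLE
  simp only [Fin.mk_zero', hrow, hQsymm]
  -- Off `0`, `f` preserves every comparison among `i, j, P⁻¹ i, P⁻¹ j`; at `0` each clause
  -- degenerates in the same way on both sides, because `P⁻¹ 0 = 0`.
  rcases eq_or_ne i 0 with rfl | hi <;> rcases eq_or_ne j 0 with rfl | hj <;>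
    simp [*]

theorem triLE_rot_of_fix_one_general (n : ℕ) [NeZero n] (x : Fin n → Fin n → ℤ)
    (P P' : Equiv.Perm (Fin n)) (hP : IsPermOf x P) (hP' : IsPermOf (rotA x) P')
    (hP0 : P 0 = 0) :
    ∀ i j : Fin n,
      TriLE x P i j ↔ TriLE (rotA x) P' ((cyc n).symm i) ((cyc n).symm j) :=
  triLE_congr (rotA_zero_cyc_symm hP hP0) (hP'.unique hP.rotA) hP0 strictMonoOn_cyc_symm

theorem triLE_rot_of_fix_one (n : ℕ) [NeZero n] (x : Fin n → Fin n → ℤ) (hx : IsAlcove x)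
    (P P' : Equiv.Perm (Fin n)) (hP : IsPermOf x P) (hP' : IsPermOf (rotA x) P')
    (hP0 : P 0 = 0) :
    ∀ i j : Fin n,
      TriLE x P i j ↔ TriLE (rotA x) P' ((cyc n).symm i) ((cyc n).symm j) :=
  triLE_rot_of_fix_one_general n x P P' hP hP' hP0
end

section
/- Let μ, λ ∈ ℤⁿ be dominant coweights with λ = μ + ϖ_t for some t ∈ {1,...,n-1}. Then for any λ-permissible alcove x, there exists a μ-permissible alcove y such that x is in relative position ϖ_t with respect to y, i.e., dom(x^{(i)} - y^{(i)}) = ϖ_t for all 1 ≤ i ≤ n. -/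
open Finset

/-!
Write `V i = x i - ϖ_i`, so that `λ`-permissibility says `dom (V i) ⪯ λ`. We take
`y i = x i - 1_{S i}` for a set `S i` of `t` coordinates at which `V i` is largest; then
`x i - y i` is a `0/1`-vector with `t` ones, and lowering `t` largest entries by one turns a vector
dominated by `μ + ϖ_t` into one dominated by `μ`. That last step is a statement about subset sums:
for dominant `μ`, `dom v ⪯ μ` means that the totals agree and that any `k` entries of `v` sum to at
most `μ 0 + ⋯ + μ (k-1)`.

For `y` to be an alcove, the sets must satisfy `S (i + 1) ⊆ insert (P i) (S i)`, where `P` is the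
permutation of `x`, i.e. `x (i + 1) = x i + e_{P i}` (cyclically). This holds when `S i` consists
of the `t` largest coordinates for the key `n * x i j + L j`, with a tie-breaker `L` independent of
`i`: the step from `i` to `i + 1` raises only the key of `P i`, and `L` can be chosen so that every
key order refines the order of coordinates by `V i`.
-/

section Dominance

variable {n : ℕ}

def prefixSum (μ : Fin n → ℤ) (m : ℕ) : ℤ := ∑ j ∈ univ.filter (fun j : Fin n => (j : ℕ) < m), μ j

lemma card_filter_val_lt (m : ℕ) : #(univ.filter fun j : Fin n => (j : ℕ) < m) = min m n := by
  rcases le_or_gt n m with h | h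
  · rw [filter_true_of_mem fun j _ => j.isLt.trans_le h]
    simp [h]
  · rw [show (univ.filter fun j : Fin n => (j : ℕ) < m) = Iio ⟨m, h⟩ by
      ext; simp only [mem_filter, mem_univ, true_and, mem_Iio, Fin.lt_def], Fin.card_Iio]
    simp [h.le]

lemma card_filter_le_val_lt {a b : ℕ} (hab : a ≤ b) (hb : b ≤ n) :
    #(univ.filter fun j : Fin n => a ≤ (j : ℕ) ∧ (j : ℕ) < b) = b - a := by
  have hsplit : (univ.filter fun j : Fin n => (j : ℕ) < b) =
      (univ.filter fun j : Fin n => (j : ℕ) < a) ∪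
        (univ.filter fun j : Fin n => a ≤ (j : ℕ) ∧ (j : ℕ) < b) := by
    ext j
    simp only [mem_union, mem_filter, mem_univ, true_and]
    omega
  have hdisj : Disjoint (univ.filter fun j : Fin n => (j : ℕ) < a)
      (univ.filter fun j : Fin n => a ≤ (j : ℕ) ∧ (j : ℕ) < b) :=
    disjoint_filter.2 fun j _ h1 h2 => by omega
  have := card_union_of_disjoint hdisj
  rw [← hsplit, card_filter_val_lt, card_filter_val_lt] at this
  omega

lemma sum_ite_mem_one {ι : Type*} [DecidableEq ι] (A S : Finset ι) :
    ∑ j ∈ A, (if j ∈ S then (1 : ℤ) else 0) = #(A ∩ S) := by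
  rw [sum_boole, filter_mem_eq_inter]

lemma prefixSum_of_le (μ : Fin n → ℤ) {m : ℕ} (hm : n ≤ m) : prefixSum μ m = ∑ j, μ j := by
  rw [prefixSum, filter_true_of_mem fun j _ => j.isLt.trans_le hm]

lemma prefixSum_succ_eq_sum_Iic (μ : Fin n → ℤ) (k : Fin n) :
    prefixSum μ ((k : ℕ) + 1) = ∑ j ∈ Iic k, μ j := by
  refine sum_congr (Finset.ext fun j => ?_) fun _ _ => rfl
  simp only [mem_filter, mem_univ, true_and, mem_Iic, Fin.le_def]
  omega

lemma prefixSum_varpi (t m : ℕ) : prefixSum (varpi n t) m = min (min m t) n := by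
  simp only [prefixSum, varpi, sum_boole, filter_filter, ← lt_min_iff, card_filter_val_lt]

lemma prefixSum_add_sum_filter (μ : Fin n → ℤ) {a b : ℕ} (hab : a ≤ b) :
    prefixSum μ a + ∑ j ∈ univ.filter (fun j : Fin n => a ≤ (j : ℕ) ∧ (j : ℕ) < b), μ j =
      prefixSum μ b := by
  rw [prefixSum, prefixSum, ← sum_union]
  · congr 1
    ext j
    simp only [mem_union, mem_filter, mem_univ, true_and]
    omega
  · exact disjoint_filter.2 fun j _ h1 h2 => by omega

lemma prefixSum_add_mul_le {μ : Fin n → ℤ} {a b : ℕ} {θ : ℤ} (hab : a ≤ b) (hb : b ≤ n)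
    (hθ : ∀ j : Fin n, a ≤ (j : ℕ) → (j : ℕ) < b → θ ≤ μ j) :
    prefixSum μ a + (b - a : ℕ) * θ ≤ prefixSum μ b := by
  rw [← prefixSum_add_sum_filter μ hab, ← card_filter_le_val_lt hab hb, ← nsmul_eq_mul]
  gcongr
  exact card_nsmul_le_sum _ _ _ fun j hj => by
    simp only [mem_filter] at hj
    exact hθ j hj.2.1 hj.2.2

lemma prefixSum_le_add_mul {μ : Fin n → ℤ} {a b : ℕ} {θ : ℤ} (hab : a ≤ b) (hb : b ≤ n)
    (hθ : ∀ j : Fin n, a ≤ (j : ℕ) → (j : ℕ) < b → μ j ≤ θ) :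
    prefixSum μ b ≤ prefixSum μ a + (b - a : ℕ) * θ := by
  rw [← prefixSum_add_sum_filter μ hab, ← card_filter_le_val_lt hab hb, ← nsmul_eq_mul]
  gcongr
  exact sum_le_card_nsmul _ _ _ fun j hj => by
    simp only [mem_filter] at hj
    exact hθ j hj.2.1 hj.2.2

lemma isDominant_varpi (t : ℕ) : IsDominant (varpi n t) := fun a b hab => by
  have := Fin.le_def.1 hab
  unfold varpi
  split_ifs <;> omega

lemma isDominant_domOf (v : Fin n → ℤ) : IsDominant (domOf v) := fun _ _ hab => by
  simpa [domOf] using Tuple.monotone_sort (fun i => -v i) hab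

lemma sum_domOf (v : Fin n → ℤ) : ∑ j, domOf v j = ∑ j, v j :=
  Equiv.sum_comp (Tuple.sort fun i => -v i) v

lemma domOf_eq_comp {v : Fin n → ℤ} (σ : Equiv.Perm (Fin n)) (hσ : IsDominant (v ∘ σ)) :
    domOf v = v ∘ σ := by
  have := (Tuple.comp_sort_eq_comp_iff_monotone (f := fun i => -v i) (σ := σ)).2
    fun a b hab => neg_le_neg (hσ a b hab)
  funext j
  simpa [domOf] using (congrFun this j).symm

lemma domOf_indicator {S : Finset (Fin n)} {t : ℕ} (hS : #S = t) :
    domOf (fun j => if j ∈ S then (1 : ℤ) else 0) = varpi n t := by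
  have htn : t ≤ n := hS ▸ (card_le_univ S).trans_eq (Fintype.card_fin n)
  have hcard : Fintype.card {j : Fin n // (j : ℕ) < t} = Fintype.card {j // j ∈ S} := by
    rw [Fintype.card_subtype, card_filter_val_lt, Fintype.card_coe, hS, min_eq_left htn]
  set σ := (Fintype.equivOfCardEq hcard).extendSubtype
  have hmem (j : Fin n) : σ j ∈ S ↔ (j : ℕ) < t :=
    ⟨fun h => by_contra fun hj => Equiv.extendSubtype_not_mem _ j hj h,
      Equiv.extendSubtype_mem (Fintype.equivOfCardEq hcard) j⟩
  have hcomp : (fun j => if j ∈ S then (1 : ℤ) else 0) ∘ σ = varpi n t :=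
    funext fun j => by simp [varpi, hmem]
  rw [domOf_eq_comp σ (hcomp ▸ isDominant_varpi t), hcomp]

lemma DomLE.prefixSum_le {d lam : Fin n → ℤ} (h : DomLE d lam) (m : ℕ) :
    prefixSum d m ≤ prefixSum lam m := by
  rcases le_or_gt n m with hm | hm
  · rw [prefixSum_of_le d hm, prefixSum_of_le lam hm]
    exact h.1.le
  rcases m with _ | k
  · simp [prefixSum]
  · rw [prefixSum_succ_eq_sum_Iic d ⟨k, by omega⟩, prefixSum_succ_eq_sum_Iic lam ⟨k, by omega⟩]
    exact h.2 _

lemma IsDominant.sum_le_prefixSum {d : Fin n → ℤ} (hd : IsDominant d) (B : Finset (Fin n)) :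
    ∑ j ∈ B, d j ≤ prefixSum d #B := by
  obtain hB | hB := Nat.eq_zero_or_pos #B
  · simp [card_eq_zero.1 hB, prefixSum]
  set C := univ.filter fun j : Fin n => (j : ℕ) < #B
  have hBn : #B ≤ n := (card_le_univ B).trans_eq (Fintype.card_fin n)
  have hC : #C = #B := by rw [card_filter_val_lt, min_eq_left hBn]
  set θ := d ⟨#B - 1, by omega⟩
  have hBC : ∑ j ∈ B \ C, d j ≤ #(B \ C) • θ := sum_le_card_nsmul _ _ _ fun j hj => by
    simp only [C, mem_sdiff, mem_filter, mem_univ, true_and, not_lt] at hj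
    exact hd _ _ (Fin.le_def.2 (show #B - 1 ≤ (j : ℕ) by omega))
  have hCB : #(C \ B) • θ ≤ ∑ j ∈ C \ B, d j := card_nsmul_le_sum _ _ _ fun j hj => by
    simp only [C, mem_sdiff, mem_filter, mem_univ, true_and] at hj
    exact hd _ _ (Fin.le_def.2 (show (j : ℕ) ≤ #B - 1 by omega))
  rw [card_sdiff_comm hC.symm] at hBC
  rw [← sum_inter_add_sum_sdiff B C, prefixSum, ← sum_inter_add_sum_sdiff C B, inter_comm]
  linarith

lemma DomLE.sum_le_prefixSum {v lam : Fin n → ℤ} (h : DomLE (domOf v) lam)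
    (A : Finset (Fin n)) : ∑ j ∈ A, v j ≤ prefixSum lam #A := by
  set σ := Tuple.sort fun i => -v i
  calc ∑ j ∈ A, v j = ∑ j ∈ A.map σ.symm.toEmbedding, domOf v j := by simp [σ, domOf, sum_map]
    _ ≤ prefixSum (domOf v) #A := by
      simpa using (isDominant_domOf v).sum_le_prefixSum (A.map σ.symm.toEmbedding)
    _ ≤ prefixSum lam #A := h.prefixSum_le _

lemma domLE_domOf_of_sum_le {v μ : Fin n → ℤ} (hsum : ∑ j, v j = ∑ j, μ j)
    (h : ∀ A : Finset (Fin n), ∑ j ∈ A, v j ≤ prefixSum μ #A) : DomLE (domOf v) μ := by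
  refine ⟨(sum_domOf v).trans hsum, fun k => ?_⟩
  have := h ((Iic k).map (Tuple.sort fun i => -v i).toEmbedding)
  rwa [sum_map, card_map, Fin.card_Iic, prefixSum_succ_eq_sum_Iic] at this

lemma IsDominant.sum_sub_indicator_le {μ v : Fin n → ℤ} {S : Finset (Fin n)} {t : ℕ}
    (hμ : IsDominant μ) (hS : #S = t) (htop : ∀ j ∈ S, ∀ k ∉ S, v k ≤ v j)
    (hv : ∀ A : Finset (Fin n), ∑ j ∈ A, v j ≤ prefixSum μ #A + min #A t)
    (A : Finset (Fin n)) :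
    ∑ j ∈ A, (v j - if j ∈ S then 1 else 0) ≤ prefixSum μ #A := by
  rw [sum_sub_distrib, sum_ite_mem_one]
  have hvA := hv A
  have hvAS := hv (A ∩ S)
  have hvAuS := hv (A ∪ S)
  rw [← union_sdiff_self_eq_union, sum_union disjoint_sdiff, union_sdiff_self_eq_union] at hvAuS
  have hAS := card_sdiff_add_card_inter A S
  have hSA := card_sdiff_add_card_inter S A
  have hu := card_union_add_card_inter A S
  rw [inter_comm] at hSA
  have hkn : #A ≤ n := (card_le_univ A).trans_eq (Fintype.card_fin n)
  have hun : #(A ∪ S) ≤ n := (card_le_univ _).trans_eq (Fintype.card_fin n)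
  set k := #A
  set a := #(A ∩ S)
  set u := #(A ∪ S)
  by_cases hsat : min k t ≤ a
  · omega
  rw [not_le] at hsat
  -- Compare the entries of `A \ S` with `θ`, the last entry of the length-`k` prefix of `μ`.
  set θ := μ ⟨k - 1, by omega⟩
  by_cases hsmall : ∀ j ∈ A \ S, v j ≤ θ
  · have hout : ∑ j ∈ A \ S, v j ≤ ((k - a : ℕ) : ℤ) * θ := by
      rw [← nsmul_eq_mul, show k - a = #(A \ S) by omega]
      exact sum_le_card_nsmul _ _ _ hsmall
    have hpre := prefixSum_add_mul_le (μ := μ) (θ := θ) (by omega : a ≤ k) hkn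
      fun j _ hj => hμ _ _ (Fin.le_def.2 (show (j : ℕ) ≤ k - 1 by omega))
    rw [min_eq_left (by omega : a ≤ t)] at hvAS
    rw [← sum_inter_add_sum_sdiff A S]
    linarith
  · -- Then every entry of `S` exceeds `θ`, and the bound for `A ∪ S` is the one to use.
    obtain ⟨j₀, hj₀, hθj₀⟩ : ∃ j ∈ A \ S, θ < v j := by
      simpa only [not_forall, not_le, exists_prop] using hsmall
    have hbig : ((t - a : ℕ) : ℤ) * (θ + 1) ≤ ∑ j ∈ S \ A, v j := by
      rw [← nsmul_eq_mul, show t - a = #(S \ A) by omega]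
      exact card_nsmul_le_sum _ _ _ fun j hj =>
        hθj₀.trans_le (htop j (mem_sdiff.1 hj).1 j₀ (mem_sdiff.1 hj₀).2)
    have hpre := prefixSum_le_add_mul (μ := μ) (θ := θ) (by omega : k ≤ u) hun
      fun j hj _ => hμ _ _ (Fin.le_def.2 (show k - 1 ≤ (j : ℕ) by omega))
    rw [min_eq_right (by omega : t ≤ u)] at hvAuS
    rw [show u - k = t - a by omega] at hpre
    push_cast [show a ≤ t by omega] at hbig hpre
    linarith

theorem DomLE.domOf_sub_indicator {μ lam v : Fin n → ℤ} {S : Finset (Fin n)} {t : ℕ}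
    (hμ : IsDominant μ) (heq : ∀ j, lam j = μ j + varpi n t j) (h : DomLE (domOf v) lam)
    (hS : #S = t) (htop : ∀ j ∈ S, ∀ k ∉ S, v k ≤ v j) :
    DomLE (domOf fun j => v j - if j ∈ S then 1 else 0) μ := by
  have hlam (m : ℕ) : prefixSum lam m = prefixSum μ m + min (min m t) n := by
    rw [← prefixSum_varpi]
    simp only [prefixSum, heq, sum_add_distrib]
  have htn : t ≤ n := hS ▸ (card_le_univ S).trans_eq (Fintype.card_fin n)
  refine domLE_domOf_of_sum_le ?_ (hμ.sum_sub_indicator_le hS htop fun A => ?_)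
  · have htotal := hlam n
    rw [prefixSum_of_le lam le_rfl, prefixSum_of_le μ le_rfl, ← h.1, sum_domOf] at htotal
    rw [sum_sub_distrib, sum_ite_mem_one, univ_inter, htotal, hS]
    omega
  · have hA : #A ≤ n := (card_le_univ A).trans_eq (Fintype.card_fin n)
    have := h.sum_le_prefixSum A
    rwa [hlam, min_eq_left (min_le_left _ _ |>.trans hA)] at this

end Dominance
section TopSet
variable {ι α : Type*} [Fintype ι] [LinearOrder α] {f g : ι → α} {t : ℕ}

def upperCount (f : ι → α) (j : ι) : ℕ := #{k | f j < f k}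

def topSet (f : ι → α) (t : ℕ) : Finset ι := {j | upperCount f j < t}

lemma upperCount_lt_upperCount {j k : ι} (h : f j < f k) : upperCount f k < upperCount f j := by
  refine card_lt_card <| (ssubset_iff_of_subset fun m hm => ?_).2 ⟨k, ?_, ?_⟩
  · simp only [mem_filter, mem_univ, true_and] at hm ⊢
    exact h.trans hm
  · simpa using h
  · simp

lemma upperCount_lt_card (j : ι) : upperCount f j < Fintype.card ι :=
  card_lt_univ_of_notMem (x := j) (by simp)

lemma upperCount_injective (hf : Function.Injective f) : Function.Injective (upperCount f) := by
  intro j k h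
  rcases lt_trichotomy (f j) (f k) with hjk | hjk | hjk
  · exact absurd h (upperCount_lt_upperCount hjk).ne'
  · exact hf hjk
  · exact absurd h (upperCount_lt_upperCount hjk).ne

lemma card_topSet (hf : Function.Injective f) (ht : t ≤ Fintype.card ι) : #(topSet f t) = t := by
  have himg : univ.image (upperCount f) = range (Fintype.card ι) := by
    refine eq_of_subset_of_card_le (fun m hm => ?_) ?_
    · obtain ⟨j, -, rfl⟩ := mem_image.1 hm
      exact mem_range.2 (upperCount_lt_card j)
    · rw [card_range, card_image_of_injective _ (upperCount_injective hf), card_univ]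
  calc #(topSet f t) = #((univ.image (upperCount f)).filter (· < t)) := by
        rw [filter_image, card_image_of_injective _ (upperCount_injective hf), topSet]
    _ = t := by
        rw [himg, show (range (Fintype.card ι)).filter (· < t) = range t by
          ext; simp only [mem_filter, mem_range]; omega, card_range]

lemma le_of_mem_topSet_of_notMem {j k : ι} (hj : j ∈ topSet f t) (hk : k ∉ topSet f t) :
    f k ≤ f j := by
  simp only [topSet, mem_filter, mem_univ, true_and, not_lt] at hj hk
  exact not_lt.1 fun h => by have := upperCount_lt_upperCount h; omega

lemma mem_topSet_of_forall_lt {j : ι} (hfg : ∀ k, f j < f k → g j < g k)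
    (hj : j ∈ topSet g t) : j ∈ topSet f t := by
  simp only [topSet, mem_filter, mem_univ, true_and] at hj ⊢
  exact (card_le_card fun k hk => by simpa using hfg k (by simpa using hk)).trans_lt hj

end TopSet

section Alcove

variable {n : ℕ}

lemma exists_eq_ev_of_sum_eq_one {d : Fin n → ℤ} (h0 : ∀ j, 0 ≤ d j) (h1 : ∑ j, d j = 1) :
    ∃ p, d = ev n p := by
  obtain ⟨p, -, hp⟩ := exists_lt_of_sum_lt (s := univ) (f := fun _ => (0 : ℤ)) (g := d)
    (by simp [h1])
  have hsplit := add_sum_erase univ d (mem_univ p)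
  have hrest : 0 ≤ ∑ j ∈ univ.erase p, d j := sum_nonneg fun j _ => h0 j
  have hzero := (sum_eq_zero_iff_of_nonneg fun j _ => h0 j).1
    (by omega : ∑ j ∈ univ.erase p, d j = 0)
  refine ⟨p, funext fun j => ?_⟩
  by_cases hj : j = p
  · subst hj
    simp only [ev, if_true]
    omega
  · simp [ev, hj, hzero j (mem_erase.2 ⟨hj, mem_univ j⟩)]

variable [NeZero n] {x : Fin n → Fin n → ℤ} {P : Equiv.Perm (Fin n)}

lemma succA_eq (x : Fin n → Fin n → ℤ) (i j : Fin n) :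
    succA x i j = x (i + 1) j + if (i : ℕ) + 1 < n then 0 else 1 := by
  unfold succA
  split_ifs with h
  · rw [add_zero, (Fin.ext (Fin.val_add_one_of_lt' h) : i + 1 = ⟨(i : ℕ) + 1, h⟩)]
  · obtain ⟨m, rfl⟩ : ∃ m, n = m + 1 := ⟨n - 1, by omega⟩
    obtain rfl : i = Fin.last m := Fin.ext (by rw [Fin.val_last]; omega)
    rw [Fin.last_add_one]
    rfl

lemma sum_ite_val_add_one_lt : ∑ i : Fin n, (if (i : ℕ) + 1 < n then (0 : ℤ) else 1) = 1 := by
  obtain ⟨m, rfl⟩ : ∃ m, n = m + 1 := ⟨n - 1, by have := NeZero.pos n; omega⟩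
  simp [Fin.sum_univ_castSucc]

lemma sum_succA_sub_apply (x : Fin n → Fin n → ℤ) (j : Fin n) :
    ∑ i, (succA x i j - x i j) = 1 := by
  have hshift := Equiv.sum_comp (Equiv.addRight (1 : Fin n)) (fun i => x i j)
  simp only [Equiv.coe_addRight] at hshift
  simp only [succA_eq, sum_sub_distrib, sum_add_distrib, sum_ite_val_add_one_lt, hshift]
  ring

lemma IsAlcove.sum_succA_sub (hx : IsAlcove x) (i : Fin n) :
    ∑ j, (succA x i j - x i j) = 1 := by
  have hrow (k : Fin n) (hk : (k : ℕ) + 1 < n) : ∑ j, (succA x k j - x k j) = 1 := by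
    rw [sum_sub_distrib, hx.2 k hk]
    ring
  by_cases hi : (i : ℕ) + 1 < n
  · exact hrow i hi
  -- The last row: all other rows and all columns sum to `1`.
  have htot : ∑ k, ∑ j, (succA x k j - x k j) = n := by
    rw [sum_comm]
    simp only [sum_succA_sub_apply, sum_const, card_univ, Fintype.card_fin, nsmul_eq_mul, mul_one]
  rw [← add_sum_erase _ _ (mem_univ i), sum_congr rfl fun k hk => hrow k (by
    have := Fin.val_ne_iff.2 (ne_of_mem_erase hk); omega)] at htot
  simp only [sum_const, card_erase_of_mem (mem_univ i), card_univ, Fintype.card_fin,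
    nsmul_eq_mul, mul_one] at htot
  push_cast [NeZero.one_le] at htot
  linarith

lemma IsAlcove.exists_isPermOf (hx : IsAlcove x) : ∃ P, IsPermOf x P := by
  choose p hp using fun i =>
    exists_eq_ev_of_sum_eq_one (fun j => sub_nonneg.2 (hx.1 i j)) (hx.sum_succA_sub i)
  have hinj : Function.Injective p := by
    intro i₁ i₂ h
    by_contra hne
    have := sum_le_sum_of_subset_of_nonneg (subset_univ {i₁, i₂})
      fun i _ _ => sub_nonneg.2 (hx.1 i (p i₁))
    rw [sum_succA_sub_apply, sum_pair hne, congrFun (hp i₁), congrFun (hp i₂), h] at this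
    simp [ev] at this
  refine ⟨Equiv.ofBijective p hinj.bijective_of_finite, fun i j => ?_⟩
  rw [Equiv.ofBijective_apply, ← congrFun (hp i) j]
  ring

lemma IsPermOf.apply_eq (hP : IsPermOf x P) (i j : Fin n) :
    x i j = x 0 j + if P.symm j < i then 1 else 0 := by
  suffices h : ∀ m (hm : m < n), x ⟨m, hm⟩ j = x 0 j + if (P.symm j : ℕ) < m then 1 else 0 from
    h i i.isLt
  intro m hm
  induction m with
  | zero => simp
  | succ m ih =>
    have hstep := hP ⟨m, by omega⟩ j
    rw [succA, dif_pos hm, ih (by omega)] at hstep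
    simp only [hstep, ev, ← Equiv.symm_apply_eq, Fin.ext_iff]
    split_ifs <;> omega

lemma IsPermOf.isAlcove_sub_indicator (hP : IsPermOf x P) {S : Fin n → Finset (Fin n)} {t : ℕ}
    (hS : ∀ i, #(S i) = t) (hstep : ∀ i, ∀ j ∈ S (i + 1), j ≠ P i → j ∈ S i) :
    IsAlcove fun i j => x i j - if j ∈ S i then 1 else 0 := by
  have hsucc (i j : Fin n) : succA (fun i j => x i j - if j ∈ S i then 1 else 0) i j =
      x i j + ev n (P i) j - if j ∈ S (i + 1) then 1 else 0 := by
    rw [succA_eq, ← hP i j, succA_eq]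
    ring
  refine ⟨fun i j => ?_, fun i _ => ?_⟩
  · have hind :
        (if j ∈ S (i + 1) then (1 : ℤ) else 0) ≤ ev n (P i) j + if j ∈ S i then 1 else 0 := by
      by_cases hj : j = P i
      · simp only [ev, hj, if_true]
        split_ifs <;> norm_num
      · simp only [ev, hj, if_false, zero_add]
        split_ifs with h₁ h₂ <;> first | exact absurd (hstep i j h₁ hj) h₂ | norm_num
    rw [hsucc]
    linarith
  · simp only [hsucc, sum_sub_distrib, sum_add_distrib, sum_ite_mem_one, univ_inter, hS, ev,
      sum_ite_eq', mem_univ, if_true]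
    ring

end Alcove

section Key

variable {n : ℕ} [NeZero n] {x : Fin n → Fin n → ℤ} {P : Equiv.Perm (Fin n)}

-- `n * x i j` plus a tie-breaker independent of `i`, tuned so that for every `i` the key order
-- refines the order by `x i j - ϖ_i j` (`alcoveKey_bounds`): within a level, the coordinates whose
-- next change is a drop come first, then the fixed points of `P`, then those about to rise.
def alcoveKey (x : Fin n → Fin n → ℤ) (P : Equiv.Perm (Fin n)) (i j : Fin n) : ℤ :=
  n * (x i j + 2 * x 0 j + ((if P.symm j ≤ j then 1 else 0) + if P.symm j < j then 1 else 0)) + j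

lemma IsPermOf.alcoveKey_bounds (hP : IsPermOf x P) (i j : Fin n) :
    3 * n * (x i j - varpi n i j) + i ≤ alcoveKey x P i j ∧
      alcoveKey x P i j < 3 * n * (x i j - varpi n i j) + i + 3 * n := by
  have hi := i.isLt
  have hj := j.isLt
  rw [alcoveKey, hP.apply_eq i j, varpi]
  simp only [Fin.le_def, Fin.lt_def]
  split_ifs <;> constructor <;> push_cast <;> linarith

lemma IsPermOf.alcoveKey_lt_alcoveKey (hP : IsPermOf x P) {i j k : Fin n}
    (h : x i j - varpi n i j < x i k - varpi n i k) : alcoveKey x P i j < alcoveKey x P i k := by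
  have hj := (hP.alcoveKey_bounds i j).2
  have hk := (hP.alcoveKey_bounds i k).1
  have : 3 * n * (x i j - varpi n i j) + 3 * n ≤ 3 * n * (x i k - varpi n i k) := by
    nlinarith
  linarith

lemma alcoveKey_injective (x : Fin n → Fin n → ℤ) (P : Equiv.Perm (Fin n)) (i : Fin n) :
    Function.Injective (alcoveKey x P i) := by
  intro j k h
  have hjk (a b : ℤ) (hab : n * a + j = n * b + k) : (j : ℤ) = k := by
    have hdvd : (n : ℤ) ∣ (k : ℤ) - j := Dvd.intro (a - b) (by linear_combination hab)
    have := Int.eq_zero_of_abs_lt_dvd hdvd (by rw [abs_lt]; omega)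
    omega
  exact Fin.ext (by exact_mod_cast hjk _ _ h)

lemma IsPermOf.alcoveKey_succ (hP : IsPermOf x P) (i j : Fin n) :
    alcoveKey x P (i + 1) j =
      alcoveKey x P i j + n * ev n (P i) j - n * if (i : ℕ) + 1 < n then 0 else 1 := by
  have := hP i j
  rw [succA_eq] at this
  unfold alcoveKey
  linear_combination n * this

lemma IsPermOf.mem_topSet_alcoveKey_of_succ (hP : IsPermOf x P) {t : ℕ} {i j : Fin n}
    (hj : j ∈ topSet (alcoveKey x P (i + 1)) t) (hjP : j ≠ P i) :
    j ∈ topSet (alcoveKey x P i) t := by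
  refine mem_topSet_of_forall_lt (fun k hk => ?_) hj
  have hev : 0 ≤ (n : ℤ) * ev n (P i) k :=
    mul_nonneg (by positivity) (by unfold ev; split_ifs <;> norm_num)
  rw [hP.alcoveKey_succ, hP.alcoveKey_succ, ev, if_neg hjP]
  linarith

end Key

theorem convolve_comb_general (n : ℕ) (μ lam : Fin n → ℤ) (t : ℕ) (htn : t ≤ n - 1)
    (hμ : IsDominant μ)
    (heq : ∀ j, lam j = μ j + varpi n t j)
    (x : Fin n → Fin n → ℤ) (hx : IsAlcove x) (hxperm : Permissible lam x) :
    ∃ y : Fin n → Fin n → ℤ, IsAlcove y ∧ Permissible μ y ∧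
      ∀ i : Fin n, domOf (fun j => x i j - y i j) = varpi n t := by
  rcases Nat.eq_zero_or_pos n with rfl | hn
  · exact ⟨x, hx, fun i => i.elim0, fun i => i.elim0⟩
  have : NeZero n := ⟨hn.ne'⟩
  obtain ⟨P, hP⟩ := hx.exists_isPermOf
  set S := fun i => topSet (alcoveKey x P i) t
  have hS (i : Fin n) : #(S i) = t :=
    card_topSet (alcoveKey_injective x P i) (by rw [Fintype.card_fin]; omega)
  refine ⟨fun i j => x i j - if j ∈ S i then 1 else 0,
    hP.isAlcove_sub_indicator hS fun i _ => hP.mem_topSet_alcoveKey_of_succ, fun i => ?_,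
    fun i => by simpa using domOf_indicator (hS i)⟩
  have htop : ∀ j ∈ S i, ∀ k ∉ S i, x i k - varpi n i k ≤ x i j - varpi n i j :=
    fun j hj k hk => not_lt.1 fun h =>
      (le_of_mem_topSet_of_notMem hj hk).not_gt (hP.alcoveKey_lt_alcoveKey h)
  simpa only [Permissible, sub_right_comm] using (hxperm i).domOf_sub_indicator hμ heq (hS i) htop

theorem convolve_comb (n : ℕ) (μ lam : Fin n → ℤ) (t : ℕ) (ht : 1 ≤ t) (htn : t ≤ n - 1)
    (hμ : IsDominant μ) (hlam : IsDominant lam)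
    (heq : ∀ j, lam j = μ j + varpi n t j)
    (x : Fin n → Fin n → ℤ) (hx : IsAlcove x) (hxperm : Permissible lam x) :
    ∃ y : Fin n → Fin n → ℤ, IsAlcove y ∧ Permissible μ y ∧
      ∀ i : Fin n, domOf (fun j => x i j - y i j) = varpi n t :=
  convolve_comb_general n μ lam t htn hμ heq x hx hxperm
end

section
/- Let x be a ϖ_{n-r}-permissible alcove, with associated data: J^{(i)} = (j^{(i)}_1,...,j^{(i)}_r) tracking the positions of zeros of x^{(i)} - ϖ_{i-1} via the inductive rule j^{(i+1)}_q = i if j^{(i)}_q = P(x)(i), else j^{(i)}_q; change points 1 = c(q,1) < c(q,2) < ... < c(q,f_q) < n+2 of the sequence (j^{(i)}_q)_{i=1}^{n+1}; and values a(q,f) = j_q^{(c(q,f))}. Then for 2 ≤ f ≤ f_q we have a(q,f) = c(q,f) - 1, and moreover a(q,1) > a(q,2) and a(q,2) < a(q,3) < ... < a(q,f_q). -/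
open Finset

/-
The trajectory `j_q^{(1)}, …, j_q^{(n+1)}` can only change at step `i` by jumping to `i`, and then
`P(x)(i)` is the value it leaves; this gives `a(q,f) = c(q,f) - 1`, and the increase of `a(q,·)`
from the second block on is that of the change points. For `a(q,1) > a(q,2)`, put `j = a(q,1)`, a zero
of `x^{(1)}`, and `i = a(q,2)`, the step at which the trajectory leaves `j`, so `P(x)(i) = j`. Along an
alcove `x^{(i+1)} ≤ x^{(1)} + (1,…,1)`, and `x^{(i+1)} = x^{(i)} + e_j`, hence `x^{(i)}_j ≤ 0`; permissibility for `ϖ_{n-r}` with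
`r ≥ 1` makes `x^{(i)} - ϖ_{i-1}` nonnegative, which forces `j ≥ i`, and `j ≠ i` since the
trajectory does change.
-/

lemma add_sub_le_of_lt_succ {c : ℕ → ℕ} {N : ℕ}
    (hc : ∀ f, 1 ≤ f → f ≤ N → c f < c (f + 1)) {a b : ℕ} (ha : 1 ≤ a) (hab : a ≤ b)
    (hb : b ≤ N + 1) : c a + (b - a) ≤ c b := by
  induction b, hab using Nat.le_induction with
  | base => simp
  | succ b hab ih =>
    have := hc b (by omega) (by omega)
    have := ih (by omega)
    omega

section Dominance

variable {n : ℕ}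

lemma DomLE.le_of_isTop {μ lam : Fin n → ℤ} (h : DomLE μ lam) {l : Fin n} (hl : IsTop l) :
    lam l ≤ μ l := by
  have hsplit : ∀ w : Fin n → ℤ, ∑ i, w i = ∑ i ∈ Iio l, w i + w l := fun w => by
    rw [← Finset.sum_erase_add _ _ (mem_univ l)]
    congr 2
    ext i
    simpa [lt_iff_le_and_ne] using fun _ => hl i
  have hIio : ∑ i ∈ Iio l, μ i ≤ ∑ i ∈ Iio l, lam i := by
    by_cases hl0 : (l : ℕ) = 0
    · have : Iio l = ∅ := by
        ext i
        simp only [mem_Iio, Fin.lt_def, notMem_empty, iff_false]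
        omega
      simp [this]
    · have : Iio l = Iic ⟨l - 1, by omega⟩ := by
        ext i
        simp only [mem_Iio, mem_Iic, Fin.lt_def, Fin.le_def]
        omega
      rw [this]
      exact h.2 _
  have := h.1
  rw [hsplit μ, hsplit lam] at this
  linarith

lemma domOf_le_of_isTop (v : Fin n → ℤ) {l : Fin n} (hl : IsTop l) (j : Fin n) :
    domOf v l ≤ v j := by
  have := Tuple.monotone_sort (fun i => -v i) (hl ((Tuple.sort fun i => -v i).symm j))
  simpa [domOf] using this

lemma Permissible.varpi_le {t : ℕ} (ht : t < n) {x : Fin n → Fin n → ℤ}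
    (hx : Permissible (varpi n t) x) (i j : Fin n) : varpi n i j ≤ x i j := by
  have hl : IsTop (⟨n - 1, by omega⟩ : Fin n) := fun i => by simp only [Fin.le_def]; omega
  have := ((hx i).le_of_isTop hl).trans (domOf_le_of_isTop _ hl j)
  have htop : varpi n t ⟨n - 1, by omega⟩ = 0 := if_neg (by simp only; omega)
  linarith

end Dominance

section Alcove

variable {n : ℕ} {x : Fin n → Fin n → ℤ}

lemma succA_of_lt {i : Fin n} (h : (i : ℕ) + 1 < n) : succA x i = x ⟨i + 1, h⟩ := dif_pos h

lemma IsAlcove.apply_mono (hx : IsAlcove x) {a b : Fin n} (hab : a ≤ b) (j : Fin n) :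
    x a j ≤ x b j := by
  obtain ⟨a, ha⟩ := a
  obtain ⟨b, hb⟩ := b
  simp only [Fin.mk_le_mk] at hab
  induction b, hab using Nat.le_induction with
  | base => rfl
  | succ b hab ih =>
    calc x ⟨a, ha⟩ j ≤ x ⟨b, by omega⟩ j := ih _
      _ ≤ succA x ⟨b, by omega⟩ j := hx.1 _ j
      _ = x ⟨b + 1, hb⟩ j := by rw [succA_of_lt hb]

variable [NeZero n]

lemma succA_of_not_lt {i : Fin n} (h : ¬ (i : ℕ) + 1 < n) : succA x i = fun j => x 0 j + 1 :=
  dif_neg h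

lemma IsAlcove.succA_le (hx : IsAlcove x) (i j : Fin n) : succA x i j ≤ x 0 j + 1 := by
  by_cases h : (i : ℕ) + 1 < n
  · have hn : ¬ ((⟨n - 1, by omega⟩ : Fin n) : ℕ) + 1 < n := by simp only; omega
    calc succA x i j = x ⟨i + 1, h⟩ j := by rw [succA_of_lt h]
      _ ≤ x ⟨n - 1, by omega⟩ j := hx.apply_mono (by simp only [Fin.mk_le_mk]; omega) j
      _ ≤ succA x ⟨n - 1, by omega⟩ j := hx.1 _ j
      _ = x 0 j + 1 := by rw [succA_of_not_lt hn]
  · rw [succA_of_not_lt h]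

lemma IsAlcove.le_of_perm_eq (hx : IsAlcove x) {P : Equiv.Perm (Fin n)} (hP : IsPermOf x P)
    (hnn : ∀ i j : Fin n, varpi n i j ≤ x i j) {i j : Fin n} (hPi : P i = j) (hj : x 0 j = 0) :
    i ≤ j := by
  have hstep : x i j + 1 ≤ 1 := by simpa [hP i j, ev, hPi, hj] using hx.succA_le i j
  by_contra! hji
  have := hnn i j
  simp only [varpi, Fin.lt_def.mp hji, if_true] at this
  omega

end Alcove

lemma perm_eq_of_succ_ne {n : ℕ} {s : Fin (n + 1) → Fin n} {P : Equiv.Perm (Fin n)}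
    (hs : ∀ i : Fin n, s i.succ = if s i.castSucc = P i then i else s i.castSucc) {i : Fin n}
    (h : s i.succ ≠ s i.castSucc) : s i.succ = i ∧ P i = s i.castSucc := by
  have := hs i
  split_ifs at this with hPi
  · exact ⟨this, hPi.symm⟩
  · exact absurd this h

theorem aq_basic_general (n r : ℕ) [NeZero n]
    (x : Fin n → Fin n → ℤ) (hx : IsAlcove x)
    (hxperm : Permissible (varpi n (n - r)) x)
    (P : Equiv.Perm (Fin n)) (hP : IsPermOf x P)
    (J : Fin (n + 1) → Fin r → Fin n)
    (hJ0 : ∀ j : Fin n, x 0 j = 0 ↔ ∃ q, J 0 q = j)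
    (hJrec : ∀ i : Fin n, ∀ q,
      J i.succ q = if J i.castSucc q = P i then i else J i.castSucc q)
    (q : Fin r)
    (jq : ℕ → Fin n)
    (hjq : ∀ p : ℕ, ∀ h : p - 1 < n + 1, 1 ≤ p → jq p = J ⟨p - 1, h⟩ q)
    (fq : ℕ)
    (cfun : ℕ → ℕ) (afun : ℕ → Fin n)
    (hc1 : cfun 1 = 1)
    (hcmono : ∀ f, 1 ≤ f → f ≤ fq → cfun f < cfun (f + 1))
    (hctop : cfun (fq + 1) = n + 2)
    (hconst : ∀ f, 1 ≤ f → f ≤ fq → ∀ p, cfun f ≤ p → p < cfun (f + 1) → p ≤ n + 1 →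
      jq p = afun f)
    (hchange : ∀ f, 1 ≤ f → f < fq → jq (cfun (f + 1)) ≠ jq (cfun (f + 1) - 1)) :
    (∀ f, 2 ≤ f → f ≤ fq → (afun f : ℕ) = cfun f - 2) ∧
    (2 ≤ fq → (afun 2 : ℕ) < (afun 1 : ℕ)) ∧
    (∀ f, 2 ≤ f → f < fq → (afun f : ℕ) < (afun (f + 1) : ℕ)) := by
  have hcfun : ∀ a b, 1 ≤ a → a ≤ b → b ≤ fq + 1 → cfun a + (b - a) ≤ cfun b :=
    fun _ _ => add_sub_le_of_lt_succ hcmono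
  have hjump : ∀ f, 2 ≤ f → f ≤ fq → ∃ i : Fin n, (i : ℕ) + 2 = cfun f ∧
      jq (cfun f) = i ∧ P i = jq (cfun f - 1) ∧ jq (cfun f) ≠ jq (cfun f - 1) := by
    intro f hf hffq
    have hlow := hcfun 1 f le_rfl (by omega) (by omega)
    have hup := hcfun f (fq + 1) (by omega) (by omega) le_rfl
    have hne := hchange (f - 1) (by omega) (by omega)
    rw [Nat.sub_add_cancel (by omega)] at hne
    let i : Fin n := ⟨cfun f - 2, by omega⟩
    have hsucc : jq (cfun f) = J i.succ q :=
      (hjq _ (by omega) (by omega)).trans (congrArg (J · q) (Fin.ext (by simp [i]; omega)))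
    have hcast : jq (cfun f - 1) = J i.castSucc q :=
      (hjq _ (by omega) (by omega)).trans (congrArg (J · q) (Fin.ext (by simp [i]; omega)))
    rw [hsucc, hcast] at hne ⊢
    have hstep := perm_eq_of_succ_ne (s := fun i => J i q) (fun i => hJrec i q) hne
    exact ⟨i, by simp only [i]; omega, hstep.1, hstep.2, hne⟩
  have hstart : ∀ f, 2 ≤ f → f ≤ fq → (afun f : ℕ) = cfun f - 2 := by
    intro f hf hffq
    obtain ⟨i, hi, hval, -⟩ := hjump f hf hffq
    have hup := hcfun f (fq + 1) (by omega) (by omega) le_rfl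
    rw [← hconst f (by omega) hffq _ le_rfl (hcmono f (by omega) hffq) (by omega), hval]
    omega
  refine ⟨hstart, fun h2 => ?_, fun f hf hffq => ?_⟩
  · obtain ⟨i, hi, hval, hPi, hne⟩ := hjump 2 le_rfl h2
    have hfirst : ∀ p, 1 ≤ p → p < cfun 2 → jq p = afun 1 := fun p hp hp2 =>
      hconst 1 le_rfl (by omega) p (by rw [hc1]; exact hp) hp2 (by omega)
    have hzero : x 0 (afun 1) = 0 :=
      (hJ0 _).2 ⟨q, by rw [← hfirst 1 le_rfl (by omega), hjq 1 (by omega) le_rfl]; rfl⟩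
    rw [hfirst (cfun 2 - 1) (by omega) (by omega)] at hPi hne
    rw [hval] at hne
    have hnn := hxperm.varpi_le (by have := q.pos; have := NeZero.pos n; omega)
    have hle : i ≤ afun 1 := hx.le_of_perm_eq hP hnn hPi hzero
    rw [hstart 2 le_rfl h2, ← hi, Nat.add_sub_cancel]
    exact Fin.lt_def.mp (lt_of_le_of_ne hle hne)
  · have := hstart f hf hffq.le
    have := hstart (f + 1) (by omega) hffq
    have := hcmono f (by omega) hffq.le
    have := hcfun 1 f le_rfl (by omega) (by omega)
    omega

theorem aq_basic (n r : ℕ) [NeZero n] (hr1 : 1 ≤ r) (hrn : r ≤ n - 1)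
    (x : Fin n → Fin n → ℤ) (hx : IsAlcove x)
    (hxperm : Permissible (varpi n (n - r)) x)
    (P : Equiv.Perm (Fin n)) (hP : IsPermOf x P)
    (J : Fin (n + 1) → Fin r → Fin n)
    (hJinj : Function.Injective (J 0))
    (hJ0 : ∀ j : Fin n, x 0 j = 0 ↔ ∃ q, J 0 q = j)
    (hJrec : ∀ i : Fin n, ∀ q,
      J i.succ q = if J i.castSucc q = P i then i else J i.castSucc q)
    (q : Fin r)
    (jq : ℕ → Fin n)
    (hjq : ∀ p : ℕ, ∀ h : p - 1 < n + 1, 1 ≤ p → jq p = J ⟨p - 1, h⟩ q)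
    (fq : ℕ)
    (hfq : fq = 1 + (Finset.univ.filter
      (fun i : Fin n => J i.succ q ≠ J i.castSucc q)).card)
    (cfun : ℕ → ℕ) (afun : ℕ → Fin n)
    (hc1 : cfun 1 = 1)
    (hcmono : ∀ f, 1 ≤ f → f ≤ fq → cfun f < cfun (f + 1))
    (hctop : cfun (fq + 1) = n + 2)
    (hconst : ∀ f, 1 ≤ f → f ≤ fq → ∀ p, cfun f ≤ p → p < cfun (f + 1) → p ≤ n + 1 →
      jq p = afun f)
    (hchange : ∀ f, 1 ≤ f → f < fq → jq (cfun (f + 1)) ≠ jq (cfun (f + 1) - 1)) :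
    (∀ f, 2 ≤ f → f ≤ fq → (afun f : ℕ) = cfun f - 2) ∧
    (2 ≤ fq → (afun 2 : ℕ) < (afun 1 : ℕ)) ∧
    (∀ f, 2 ≤ f → f < fq → (afun f : ℕ) < (afun (f + 1) : ℕ)) :=
  aq_basic_general n r x hx hxperm P hP J hJ0 hJrec q jq hjq fq cfun afun hc1 hcmono hctop hconst
    hchange
end

section
/- Let x be a ϖ_{n-r}-permissible alcove with associated sequences J^{(i)} and block data as above. If for some q the sequence j^{(1)}_q, j^{(2)}_q, ..., j^{(n+1)}_q changes at every step (f_q = n+1), then j^{(1)}_q = j^{(n+1)}_q = n; in particular, the permutation σ ∈ S_r defined by j^{(1)}_q = j^{(n+1)}_{σ(q)} fixes q. -/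
open Finset

/-!
If `j_q` moves at every step `i`, it must sit at `P(i)` and jump to `i`. Hence
`P(i+1) = j^{(i+1)}_q = i` for all `i < n`, so `P` is the cycle `i ↦ i - 1`, which forces
`j^{(1)}_q = P(1) = n`, and the last jump lands at `n` again. As `J^{(n+1)} = J^{(1)} ∘ σ⁻¹` is
injective, `σ` fixes `q`. In the code positions are 0-based, so `n` appears as `n - 1`.
-/

theorem Equiv.Perm.apply_zero_eq_last_of_apply_succ {m : ℕ} (P : Equiv.Perm (Fin (m + 1)))
    (hP : ∀ i : Fin m, P i.succ = i.castSucc) : P 0 = Fin.last m := by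
  rcases Fin.eq_castSucc_or_eq_last (P 0) with ⟨i, hi⟩ | hlast
  · rw [← hP i] at hi
    exact absurd (P.injective hi).symm (Fin.succ_ne_zero i)
  · exact hlast

section Trajectory

variable {m : ℕ} (P : Equiv.Perm (Fin (m + 1))) (j : Fin (m + 2) → Fin (m + 1))

/-- With 0-based indices, `j i` is the paper's `j^{(i+1)}_q`. -/
def IsTrajectory : Prop :=
  ∀ i : Fin (m + 1), j i.succ = if j i.castSucc = P i then i else j i.castSucc

variable {P j}

theorem IsTrajectory.eq_of_ne (hj : IsTrajectory P j) {i : Fin (m + 1)}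
    (hne : j i.succ ≠ j i.castSucc) : j i.castSucc = P i ∧ j i.succ = i := by
  have hi := hj i
  split_ifs at hi with hjump
  · exact ⟨hjump, hi⟩
  · exact absurd hi hne

theorem IsTrajectory.eq_last_of_forall_ne (hj : IsTrajectory P j)
    (hne : ∀ i : Fin (m + 1), j i.succ ≠ j i.castSucc) :
    j 0 = Fin.last m ∧ j (Fin.last (m + 1)) = Fin.last m := by
  have hstep := fun i => hj.eq_of_ne (hne i)
  have hP : ∀ i : Fin m, P i.succ = i.castSucc := fun i => by
    rw [← (hstep i.succ).1, ← Fin.succ_castSucc, (hstep i.castSucc).2]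
  refine ⟨?_, ?_⟩
  · rw [← P.apply_zero_eq_last_of_apply_succ hP, ← (hstep 0).1, Fin.castSucc_zero]
  · rw [← Fin.succ_last, (hstep (Fin.last m)).2]

end Trajectory

theorem fq_max_fixed_general (n r : ℕ)
    (P : Equiv.Perm (Fin n))
    (J : Fin (n + 1) → Fin r → Fin n)
    (hJinj : Function.Injective (J 0))
    (hJrec : ∀ i : Fin n, ∀ q,
      J i.succ q = if J i.castSucc q = P i then i else J i.castSucc q)
    (σ : Equiv.Perm (Fin r)) (hσ : ∀ p : Fin r, J 0 p = J (Fin.last n) (σ p))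
    (q : Fin r)
    (hall : ∀ i : Fin n, J i.succ q ≠ J i.castSucc q) :
    (J 0 q : ℕ) = n - 1 ∧ J (Fin.last n) q = J 0 q ∧ σ q = q := by
  obtain ⟨m, rfl⟩ := Nat.exists_eq_add_one.mpr (J 0 q).pos
  obtain ⟨hfirst, hlast⟩ :=
    IsTrajectory.eq_last_of_forall_ne (j := fun i => J i q) (hJrec · q) hall
  have hJlast_inj : Function.Injective (J (Fin.last (m + 1))) :=
    (Function.Injective.of_comp_iff' _ σ.bijective).mp (by rwa [funext hσ] at hJinj)
  refine ⟨by simp [hfirst], by rw [hfirst, hlast], hJlast_inj ?_⟩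
  rw [← hσ q, hfirst, hlast]

theorem fq_max_fixed (n r : ℕ) [NeZero n] (hr1 : 1 ≤ r) (hrn : r ≤ n - 1)
    (x : Fin n → Fin n → ℤ) (hx : IsAlcove x)
    (hxperm : Permissible (varpi n (n - r)) x)
    (P : Equiv.Perm (Fin n)) (hP : IsPermOf x P)
    (J : Fin (n + 1) → Fin r → Fin n)
    (hJinj : Function.Injective (J 0))
    (hJ0 : ∀ j : Fin n, x 0 j = 0 ↔ ∃ q, J 0 q = j)
    (hJrec : ∀ i : Fin n, ∀ q,
      J i.succ q = if J i.castSucc q = P i then i else J i.castSucc q)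
    (σ : Equiv.Perm (Fin r)) (hσ : ∀ p : Fin r, J 0 p = J (Fin.last n) (σ p))
    (q : Fin r)
    (hall : ∀ i : Fin n, J i.succ q ≠ J i.castSucc q) :
    (J 0 q : ℕ) = n - 1 ∧ J (Fin.last n) q = J 0 q ∧ σ q = q :=
  fq_max_fixed_general n r P J hJinj hJrec σ hσ q hall
end
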